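/- arXiv:1009.6163 — 2 statements merged into one kernel-verified Lean document; each statement's English description precedes it below -/
import Mathlib

section
/- Let L(n) : B^0 → X (n ≥ 0) be bounded linear operators defining the system x(n+1) = L(n)x_n + f(n). If the nonhomogeneous system is (ℓ^∞,ℓ^∞)-stable and there exists m ≤ 0 such that sup_{n ≥ 0} ‖L(n)P_{[−∞,m]}‖_{B^0→X} < ∞, then the homogeneous system is uniformly stable in B^0. -/
open scoped ENNReal
open MeasureTheory

namespace BP

variable {X : Type*} [NormedAddCommGroup X] [NormedSpace ℝ X] [CompleteSpace X]

/-- Weighted coordinate size: index `k : ℕ` represents the coordinate `−k ≤ 0`,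
so the weight `e^{γ m}` becomes `e^{−γ k}`. -/
noncomputable def wnorm (γ : ℝ) (φ : ℕ → X) (k : ℕ) : ℝ := ‖φ k‖ * Real.exp (-(γ * k))

/-- Membership in the phase space `B^γ`. -/
def MemB (γ : ℝ) (φ : ℕ → X) : Prop := BddAbove (Set.range (wnorm γ φ))

/-- The `B^γ` norm `|φ|_{B^γ} = sup_{m ≤ 0} ‖φ(m)‖ e^{γ m}`. -/
noncomputable def Bnorm (γ : ℝ) (φ : ℕ → X) : ℝ := ⨆ k, wnorm γ φ k

/-- The history `x_n` of `x : ℤ → X` at time `n` : coordinate `−k` is `x (n − k)`. -/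
def hist (x : ℤ → X) (n : ℤ) : ℕ → X := fun k => x (n - k)

/-- `x = x(·, τ, φ; f)` is the solution of `x(n+1) = L(n) x_n + f(n)` (`n ≥ τ`), `x_τ = φ`. -/
def IsSolution (L : ℕ → ((ℕ → X) →ₗ[ℝ] X)) (f : ℕ → X) (τ : ℕ) (φ : ℕ → X)
    (x : ℤ → X) : Prop :=
  (∀ k : ℕ, x ((τ : ℤ) - k) = φ k) ∧
  (∀ n : ℕ, τ ≤ n → x ((n : ℤ) + 1) = L n (hist x (n : ℤ)) + f n)

/-- Restriction of `x : ℤ → X` to `ℤ≥0`. -/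
def restrict (x : ℤ → X) : ℕ → X := fun n => x (n : ℤ)

/-- The `ℓ^p(ℤ≥0, X)` norm (valued in `ℝ≥0∞`). -/
noncomputable def lpNorm (p : ℝ≥0∞) {E : Type*} [NormedAddCommGroup E] (f : ℕ → E) : ℝ≥0∞ :=
  eLpNorm f p Measure.count

/-- `L(n)` is a bounded operator from `B^γ` to `X`. -/
def OpBounded (γ : ℝ) (T : (ℕ → X) →ₗ[ℝ] X) : Prop :=
  ∃ C : ℝ, ∀ φ : ℕ → X, MemB γ φ → ‖T φ‖ ≤ C * Bnorm γ φ

/-- The projection `P_{[−∞,−j]}` : keeps coordinates `−k` with `k ≥ j`. -/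
def Ptail (j : ℕ) : (ℕ → X) →ₗ[ℝ] (ℕ → X) where
  toFun φ := fun k => if j ≤ k then φ k else 0
  map_add' φ ψ := by funext k; by_cases h : j ≤ k <;> simp [h]
  map_smul' c φ := by funext k; by_cases h : j ≤ k <;> simp [h]

/-- The projection `P_{[−j,0]}` : keeps coordinates `−k` with `k ≤ j`. -/
def Phead (j : ℕ) : (ℕ → X) →ₗ[ℝ] (ℕ → X) where
  toFun φ := fun k => if k ≤ j then φ k else 0
  map_add' φ ψ := by funext k; by_cases h : k ≤ j <;> simp [h]
  map_smul' c φ := by funext k; by_cases h : k ≤ j <;> simp [h]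

/-- `E_{−j} : X → B^γ`, placing `ψ` at coordinate `−j`. -/
def Ecoord (j : ℕ) : X →ₗ[ℝ] (ℕ → X) where
  toFun ψ := fun k => if k = j then ψ else 0
  map_add' ψ χ := by funext k; by_cases h : k = j <;> simp [h]
  map_smul' c ψ := by funext k; by_cases h : k = j <;> simp [h]

/-- The backward shift `S`. -/
def shiftS : (ℕ → X) →ₗ[ℝ] (ℕ → X) where
  toFun φ := fun k => if k = 0 then 0 else φ (k - 1)
  map_add' φ ψ := by funext k; by_cases h : k = 0 <;> simp [h]
  map_smul' c φ := by funext k; by_cases h : k = 0 <;> simp [h]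

/-- `D(n) = E₀ ∘ L(n) + S`. -/
def Dop (L : ℕ → ((ℕ → X) →ₗ[ℝ] X)) (n : ℕ) : (ℕ → X) →ₗ[ℝ] (ℕ → X) :=
  (Ecoord 0).comp (L n) + shiftS

/-- `h = H g`, `h(n) = Σ_{k=0}^{n−1} S^{n−k−1} (I − P₀) g(k)`. -/
noncomputable def Hop (g : ℕ → (ℕ → X)) : ℕ → (ℕ → X) :=
  fun n => ∑ k ∈ Finset.range n,
    ((shiftS ^ (n - k - 1) : (ℕ → X) →ₗ[ℝ] (ℕ → X))
      ((LinearMap.id - Phead 0 : (ℕ → X) →ₗ[ℝ] (ℕ → X)) (g k)))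

/-- `(ℓ^p, ℓ^q)`-stability of the nonhomogeneous system. -/
def lplqStable (L : ℕ → ((ℕ → X) →ₗ[ℝ] X)) (p q : ℝ≥0∞) : Prop :=
  ∀ f : ℕ → X, lpNorm p f < ∞ → ∀ x : ℤ → X, IsSolution L f 0 0 x →
    lpNorm q (restrict x) < ∞

/-- Uniform exponential stability in `X` w.r.t. `B^γ`. -/
def UESinX (γ : ℝ) (L : ℕ → ((ℕ → X) →ₗ[ℝ] X)) : Prop :=
  ∃ K : ℝ, 1 ≤ K ∧ ∃ ν : ℝ, 0 < ν ∧
    ∀ (τ : ℕ) (φ : ℕ → X), MemB γ φ → ∀ x : ℤ → X, IsSolution L 0 τ φ x →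
      ∀ n : ℕ, τ ≤ n → ‖x (n : ℤ)‖ ≤ K * Real.exp (-(ν * ((n : ℝ) - (τ : ℝ)))) * Bnorm γ φ

/-- Uniform exponential stability in `B^γ`. -/
def UESinB (γ : ℝ) (L : ℕ → ((ℕ → X) →ₗ[ℝ] X)) : Prop :=
  ∃ K : ℝ, 1 ≤ K ∧ ∃ ν : ℝ, 0 < ν ∧
    ∀ (τ : ℕ) (φ : ℕ → X), MemB γ φ → ∀ x : ℤ → X, IsSolution L 0 τ φ x →
      ∀ n : ℕ, τ ≤ n →
        Bnorm γ (hist x (n : ℤ)) ≤ K * Real.exp (-(ν * ((n : ℝ) - (τ : ℝ)))) * Bnorm γ φ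

/-- Uniform stability in `X` w.r.t. `B^γ`. -/
def USinX (γ : ℝ) (L : ℕ → ((ℕ → X) →ₗ[ℝ] X)) : Prop :=
  ∃ K : ℝ, 1 ≤ K ∧
    ∀ (τ : ℕ) (φ : ℕ → X), MemB γ φ → ∀ x : ℤ → X, IsSolution L 0 τ φ x →
      ∀ n : ℕ, τ ≤ n → ‖x (n : ℤ)‖ ≤ K * Bnorm γ φ

/-- Uniform stability in `B^γ`. -/
def USinB (γ : ℝ) (L : ℕ → ((ℕ → X) →ₗ[ℝ] X)) : Prop :=
  ∃ K : ℝ, 1 ≤ K ∧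
    ∀ (τ : ℕ) (φ : ℕ → X), MemB γ φ → ∀ x : ℤ → X, IsSolution L 0 τ φ x →
      ∀ n : ℕ, τ ≤ n → Bnorm γ (hist x (n : ℤ)) ≤ K * Bnorm γ φ

/-- Condition (★): there exists `m ≤ 0` (here `m = −j`, `j : ℕ`) such that
`sup_{n ≥ 0} ‖L(n) P_{[−∞,m]}‖_{B^γ→X} < ∞`. -/
def StarCond (γ : ℝ) (L : ℕ → ((ℕ → X) →ₗ[ℝ] X)) : Prop :=
  ∃ (j : ℕ) (C : ℝ), ∀ (n : ℕ) (φ : ℕ → X), MemB γ φ → ‖L n (Ptail j φ)‖ ≤ C * Bnorm γ φ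

/-- `z` solves the first order system `z(n+1) = A(n) z(n)` (`n ≥ τ`), `z(τ) = ψ`. -/
def IsFOSol (A : ℕ → ((ℕ → X) →ₗ[ℝ] (ℕ → X))) (τ : ℕ) (ψ : ℕ → X)
    (z : ℕ → (ℕ → X)) : Prop :=
  z τ = ψ ∧ ∀ n : ℕ, τ ≤ n → z (n + 1) = A n (z n)

/-- Uniform exponential stability of the first order system in `B^γ`. -/
def FOUES (γ : ℝ) (A : ℕ → ((ℕ → X) →ₗ[ℝ] (ℕ → X))) : Prop :=
  ∃ K : ℝ, 1 ≤ K ∧ ∃ ν : ℝ, 0 < ν ∧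
    ∀ (τ : ℕ) (ψ : ℕ → X), MemB γ ψ → ∀ z : ℕ → (ℕ → X), IsFOSol A τ ψ z →
      ∀ n : ℕ, τ ≤ n →
        Bnorm γ (z n) ≤ K * Real.exp (-(ν * ((n : ℝ) - (τ : ℝ)))) * Bnorm γ ψ

/-- Uniform stability of the first order system in `B^γ`. -/
def FOUS (γ : ℝ) (A : ℕ → ((ℕ → X) →ₗ[ℝ] (ℕ → X))) : Prop :=
  ∃ K : ℝ, 1 ≤ K ∧
    ∀ (τ : ℕ) (ψ : ℕ → X), MemB γ ψ → ∀ z : ℕ → (ℕ → X), IsFOSol A τ ψ z →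
      ∀ n : ℕ, τ ≤ n → Bnorm γ (z n) ≤ K * Bnorm γ ψ

/-- The associated subdiagonal system: `L_sub(0) = 0`, `L_sub(n) = L(n) P_{[−n+1,0]}`. -/
def Lsub (L : ℕ → ((ℕ → X) →ₗ[ℝ] X)) : ℕ → ((ℕ → X) →ₗ[ℝ] X) :=
  fun n => if n = 0 then 0 else (L n).comp (Phead (n - 1))

/-- The system has bounded delay of order `d`. -/
def BoundedDelay (L : ℕ → ((ℕ → X) →ₗ[ℝ] X)) (d : ℕ) : Prop :=
  ∀ n : ℕ, ∃ A : Fin d → (X →L[ℝ] X), ∀ φ : ℕ → X, L n φ = ∑ k : Fin d, A k (φ k)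

set_option linter.unusedSectionVars false
set_option linter.unusedVariables false
set_option maxHeartbeats 1000000

lemma wnorm_zero (φ : ℕ → X) (k : ℕ) : wnorm 0 φ k = ‖φ k‖ := by simp [wnorm]
lemma memB_zero_of_bound {φ : ℕ → X} {c : ℝ} (h : ∀ k, ‖φ k‖ ≤ c) : MemB 0 φ := by
  refine ⟨c, ?_⟩; rintro x ⟨k, rfl⟩; rw [wnorm_zero]; exact h k
lemma Bnorm_le {φ : ℕ → X} {c : ℝ} (h : ∀ k, ‖φ k‖ ≤ c) : Bnorm 0 φ ≤ c := by
  refine ciSup_le fun k => ?_; rw [wnorm_zero]; exact h k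
lemma norm_le_Bnorm {φ : ℕ → X} (h : MemB 0 φ) (k : ℕ) : ‖φ k‖ ≤ Bnorm 0 φ := by
  rw [← wnorm_zero φ k]; exact le_ciSup h k
lemma Bnorm_nonneg (φ : ℕ → X) : 0 ≤ Bnorm 0 φ :=
  Real.iSup_nonneg fun k => by rw [wnorm_zero]; exact norm_nonneg _

def histN (x : ℕ → X) (n : ℕ) : ℕ → X := fun k => if k ≤ n then x (n - k) else 0

noncomputable def sol (L : ℕ → ((ℕ → X) →ₗ[ℝ] X)) (f : ℕ → X) : ℕ → X
  | 0 => 0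
  | (n+1) => L n (fun k => if k ≤ n then sol L f (n - k) else 0) + f n
  decreasing_by exact Nat.lt_succ_of_le (Nat.sub_le n k)

lemma sol_succ (L : ℕ → ((ℕ → X) →ₗ[ℝ] X)) (f : ℕ → X) (n : ℕ) :
    sol L f (n+1) = L n (histN (sol L f) n) + f n := by rw [sol]; rfl

noncomputable def zsol (L : ℕ → ((ℕ → X) →ₗ[ℝ] X)) (f : ℕ → X) : ℤ → X :=
  fun t => if 0 ≤ t then sol L f t.toNat else 0

lemma restrict_zsol (L : ℕ → ((ℕ → X) →ₗ[ℝ] X)) (f : ℕ → X) :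
    restrict (zsol L f) = sol L f := by
  funext n; simp [restrict, zsol]

lemma hist_zsol (L : ℕ → ((ℕ → X) →ₗ[ℝ] X)) (f : ℕ → X) (n : ℕ) :
    hist (zsol L f) (n : ℤ) = histN (sol L f) n := by
  funext k
  simp only [hist, histN, zsol]
  by_cases hk : k ≤ n
  · have h0 : (0:ℤ) ≤ (n:ℤ) - k := by omega
    have h1 : ((n:ℤ) - k).toNat = n - k := by omega
    rw [if_pos h0, h1, if_pos hk]
  · have h0 : ¬ (0:ℤ) ≤ (n:ℤ) - k := by omega
    rw [if_neg h0, if_neg hk]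

lemma isSolution_zsol (L : ℕ → ((ℕ → X) →ₗ[ℝ] X)) (f : ℕ → X) :
    IsSolution L f 0 0 (zsol L f) := by
  constructor
  · intro k
    simp only [zsol]
    by_cases hk : k = 0
    · subst hk; simp [sol]
    · have h : ¬ (0:ℤ) ≤ ((0:ℕ):ℤ) - k := by omega
      rw [if_neg h]; rfl
  · intro n _
    have h1 : (0:ℤ) ≤ (n:ℤ) + 1 := by omega
    have h2 : ((n:ℤ) + 1).toNat = n + 1 := by omega
    show (if (0:ℤ) ≤ (n:ℤ)+1 then sol L f ((n:ℤ)+1).toNat else 0) = _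
    rw [if_pos h1, h2, sol_succ, hist_zsol]

lemma sol_unique {L : ℕ → ((ℕ → X) →ₗ[ℝ] X)} {f : ℕ → X} {x : ℤ → X}
    (hx : IsSolution L f 0 0 x) : ∀ n : ℕ, x (n : ℤ) = sol L f n := by
  intro n
  induction n using Nat.strong_induction_on with
  | _ n ih =>
    match n with
    | 0 =>
      have h0 : sol L f 0 = (0 : X) := by rw [sol]
      have h1 := hx.1 0
      simpa [h0] using h1
    | n+1 =>
      have h2 := hx.2 n (Nat.zero_le n)
      have hh : hist x (n:ℤ) = histN (sol L f) n := by
        funext k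
        simp only [hist, histN]
        by_cases hk : k ≤ n
        · rw [if_pos hk]
          have he : ((n:ℤ) - k) = ((n - k : ℕ) : ℤ) := by omega
          rw [he, ih _ (Nat.lt_succ_of_le (Nat.sub_le n k))]
        · rw [if_neg hk]
          have he : ((n:ℤ) - k) = ((0:ℕ):ℤ) - ((k - n : ℕ) : ℤ) := by omega
          rw [he, hx.1 (k - n)]; rfl
      have hc : ((n+1 : ℕ) : ℤ) = (n:ℤ) + 1 := by push_cast; ring
      rw [hc, h2, hh, sol_succ]

lemma sol_sub (L : ℕ → ((ℕ → X) →ₗ[ℝ] X)) (f g : ℕ → X) :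
    ∀ n, sol L (f - g) n = sol L f n - sol L g n := by
  intro n
  induction n using Nat.strong_induction_on with
  | _ n ih =>
    match n with
    | 0 => simp [sol]
    | n+1 =>
      rw [sol_succ, sol_succ, sol_succ]
      have hh : histN (sol L (f - g)) n = histN (sol L f) n - histN (sol L g) n := by
        funext k
        simp only [histN, Pi.sub_apply]
        by_cases hk : k ≤ n
        · rw [if_pos hk, if_pos hk, if_pos hk, ih _ (Nat.lt_succ_of_le (Nat.sub_le n k))]
        · rw [if_neg hk, if_neg hk, if_neg hk]; simp
      rw [hh, map_sub]
      simp only [Pi.sub_apply]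
      abel

lemma sol_bound {L : ℕ → ((ℕ → X) →ₗ[ℝ] X)} (hL : ∀ n, OpBounded 0 (L n)) :
    ∀ n : ℕ, ∃ K : ℝ, 0 ≤ K ∧ ∀ (f : ℕ → X) (c : ℝ), 0 ≤ c → (∀ m, ‖f m‖ ≤ c) →
      ∀ m ≤ n, ‖sol L f m‖ ≤ K * c := by
  intro n
  induction n with
  | zero =>
    refine ⟨0, le_refl 0, fun f c hc hf m hm => ?_⟩
    interval_cases m
    simp [sol]
  | succ n ih =>
    obtain ⟨K, hK0, hK⟩ := ih
    obtain ⟨C, hC⟩ := hL n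
    refine ⟨max K (max C 0 * K + 1), le_trans hK0 (le_max_left _ _), fun f c hc hf m hm => ?_⟩
    rcases Nat.lt_succ_iff_lt_or_eq.mp (Nat.lt_succ_of_le hm) with h | h
    · exact le_trans (hK f c hc hf m (Nat.lt_succ_iff.mp h))
        (mul_le_mul_of_nonneg_right (le_max_left _ _) hc)
    · subst h
      rw [sol_succ]
      set ψ := histN (sol L f) n with hψ
      have hb : ∀ k, ‖ψ k‖ ≤ K * c := by
        intro k
        simp only [hψ, histN]
        by_cases hk : k ≤ n
        · rw [if_pos hk]; exact hK f c hc hf (n - k) (Nat.sub_le n k)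
        · rw [if_neg hk]; simpa using mul_nonneg hK0 hc
      have hB0 : (0:ℝ) ≤ Bnorm 0 ψ := Bnorm_nonneg ψ
      have hBn : Bnorm 0 ψ ≤ K * c := Bnorm_le hb
      calc ‖L n ψ + f n‖ ≤ ‖L n ψ‖ + ‖f n‖ := norm_add_le _ _
        _ ≤ C * Bnorm 0 ψ + c := add_le_add (hC ψ (memB_zero_of_bound hb)) (hf n)
        _ ≤ max C 0 * (K * c) + c := by
            refine add_le_add_left (le_trans (mul_le_mul_of_nonneg_right (le_max_left _ _) hB0)
              (mul_le_mul_of_nonneg_left hBn (le_max_right _ _))) c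
        _ = (max C 0 * K + 1) * c := by ring
        _ ≤ max K (max C 0 * K + 1) * c := mul_le_mul_of_nonneg_right (le_max_right _ _) hc

lemma lpNorm_top_lt_of_bound {f : ℕ → X} {c : ℝ} (h : ∀ n, ‖f n‖ ≤ c) :
    lpNorm ∞ f < ∞ := by
  rw [lpNorm, eLpNorm_exponent_top]
  exact eLpNormEssSup_lt_top_of_ae_bound (ae_of_all _ h)

lemma bound_of_lpNorm_top_lt {f : ℕ → X} (h : lpNorm ∞ f < ∞) :
    ∃ c : ℝ, ∀ n, ‖f n‖ ≤ c := by
  rw [lpNorm, eLpNorm_exponent_top] at h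
  set E := eLpNormEssSup f Measure.count with hE
  refine ⟨E.toReal, fun n => ?_⟩
  have hae : ∀ᵐ y ∂(Measure.count : Measure ℕ), ‖f y‖₊ ≤ E := ae_le_eLpNormEssSup
  rw [ae_iff] at hae
  have hemp : {y : ℕ | ¬ (‖f y‖₊ : ℝ≥0∞) ≤ E} = ∅ := Measure.count_eq_zero_iff.mp hae
  have hn : (‖f n‖₊ : ℝ≥0∞) ≤ E := by
    by_contra hcon
    have : n ∈ ({y : ℕ | ¬ (‖f y‖₊ : ℝ≥0∞) ≤ E} : Set ℕ) := hcon
    rw [hemp] at this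
    exact this
  have := ENNReal.toReal_mono h.ne hn
  simpa using this

lemma sol_add (L : ℕ → ((ℕ → X) →ₗ[ℝ] X)) (f g : ℕ → X) :
    ∀ n, sol L (f + g) n = sol L f n + sol L g n := by
  intro n
  induction n using Nat.strong_induction_on with
  | _ n ih =>
    match n with
    | 0 => simp [sol]
    | n+1 =>
      rw [sol_succ, sol_succ, sol_succ]
      have hh : histN (sol L (f + g)) n = histN (sol L f) n + histN (sol L g) n := by
        funext k
        simp only [histN, Pi.add_apply]
        by_cases hk : k ≤ n
        · rw [if_pos hk, if_pos hk, if_pos hk, ih _ (Nat.lt_succ_of_le (Nat.sub_le n k))]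
        · rw [if_neg hk, if_neg hk, if_neg hk]; simp
      rw [hh, map_add]
      simp only [Pi.add_apply]
      abel

lemma sol_smul (L : ℕ → ((ℕ → X) →ₗ[ℝ] X)) (a : ℝ) (f : ℕ → X) :
    ∀ n, sol L (a • f) n = a • sol L f n := by
  intro n
  induction n using Nat.strong_induction_on with
  | _ n ih =>
    match n with
    | 0 => simp [sol]
    | n+1 =>
      rw [sol_succ, sol_succ]
      have hh : histN (sol L (a • f)) n = a • histN (sol L f) n := by
        funext k
        simp only [histN, Pi.smul_apply]
        by_cases hk : k ≤ n
        · rw [if_pos hk, if_pos hk, ih _ (Nat.lt_succ_of_le (Nat.sub_le n k))]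
        · rw [if_neg hk, if_neg hk]; simp
      rw [hh, _root_.map_smul]
      simp only [Pi.smul_apply, smul_add]

lemma master {L : ℕ → ((ℕ → X) →ₗ[ℝ] X)} (hL : ∀ n, OpBounded 0 (L n))
    (h1 : lplqStable L ∞ ∞) :
    ∃ M : ℝ, 0 ≤ M ∧ ∀ (f : ℕ → X) (c : ℝ), 0 ≤ c → (∀ m, ‖f m‖ ≤ c) →
      ∀ n : ℕ, ‖sol L f n‖ ≤ M * c := by
  classical
  have key : ∀ f : BoundedContinuousFunction ℕ X, ∃ c : ℝ, ∀ n, ‖sol L ⇑f n‖ ≤ c := by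
    intro f
    have hfin := h1 ⇑f (lpNorm_top_lt_of_bound (fun m => f.norm_coe_le_norm m))
      (zsol L ⇑f) (isSolution_zsol L ⇑f)
    obtain ⟨c, hc⟩ := bound_of_lpNorm_top_lt hfin
    refine ⟨c, fun n => ?_⟩
    have := hc n
    rw [restrict_zsol L ⇑f] at this
    exact this
  let T : (BoundedContinuousFunction ℕ X) →ₗ[ℝ] (BoundedContinuousFunction ℕ X) :=
    { toFun := fun f => BoundedContinuousFunction.ofNormedAddCommGroup (sol L ⇑f)
        continuous_of_discreteTopology (Classical.choose (key f)) (Classical.choose_spec (key f))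
      map_add' := by
        intro f g
        ext n
        show sol L ⇑(f + g) n = sol L ⇑f n + sol L ⇑g n
        rw [BoundedContinuousFunction.coe_add, sol_add]
      map_smul' := by
        intro a f
        ext n
        show sol L ⇑(a • f) n = a • sol L ⇑f n
        have hco : ⇑(a • f) = a • ⇑f := rfl
        rw [hco, sol_smul] }
  have hcont : Continuous T := by
    apply T.continuous_of_seq_closed_graph
    intro u f y hu hTu
    ext n
    show y n = sol L ⇑f n
    obtain ⟨K, hK0, hK⟩ := sol_bound hL n
    have h₁ : Filter.Tendsto (fun i => sol L ⇑(u i) n) Filter.atTop (nhds (sol L ⇑f n)) := by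
      rw [tendsto_iff_norm_sub_tendsto_zero]
      have hb : ∀ i, ‖sol L ⇑(u i) n - sol L ⇑f n‖ ≤ K * ‖u i - f‖ := by
        intro i
        rw [← sol_sub]
        have hco : ⇑(u i) - ⇑f = ⇑(u i - f) := (BoundedContinuousFunction.coe_sub _ _).symm
        rw [hco]
        exact hK ⇑(u i - f) ‖u i - f‖ (norm_nonneg _)
          (fun m => (u i - f).norm_coe_le_norm m) n (le_refl n)
      refine squeeze_zero (fun i => norm_nonneg _) hb ?_
      have h0 : Filter.Tendsto (fun i => ‖u i - f‖) Filter.atTop (nhds 0) := by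
        rw [← tendsto_iff_norm_sub_tendsto_zero]
        exact hu
      simpa using h0.const_mul K
    have h₂ : Filter.Tendsto (fun i => sol L ⇑(u i) n) Filter.atTop (nhds (y n)) := by
      rw [tendsto_iff_norm_sub_tendsto_zero]
      have hb : ∀ i, ‖sol L ⇑(u i) n - y n‖ ≤ ‖T (u i) - y‖ := by
        intro i
        have : sol L ⇑(u i) n - y n = (T (u i) - y) n := rfl
        rw [this]
        exact (T (u i) - y).norm_coe_le_norm n
      refine squeeze_zero (fun i => norm_nonneg _) hb ?_
      rw [← tendsto_iff_norm_sub_tendsto_zero]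
      exact hTu
    exact tendsto_nhds_unique h₂ h₁
  let T' : (BoundedContinuousFunction ℕ X) →L[ℝ] (BoundedContinuousFunction ℕ X) := ⟨T, hcont⟩
  refine ⟨‖T'‖, norm_nonneg _, fun f c hc hf n => ?_⟩
  let F : BoundedContinuousFunction ℕ X := BoundedContinuousFunction.ofNormedAddCommGroup f
    continuous_of_discreteTopology c hf
  have h0 : ‖sol L f n‖ = ‖(T' F) n‖ := rfl
  rw [h0]
  calc ‖(T' F) n‖ ≤ ‖T' F‖ := (T' F).norm_coe_le_norm n
    _ ≤ ‖T'‖ * ‖F‖ := T'.le_opNorm F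
    _ ≤ ‖T'‖ * c := mul_le_mul_of_nonneg_left
        (BoundedContinuousFunction.norm_ofNormedAddCommGroup_le _ hc hf) (norm_nonneg _)

lemma Ecoord_apply (i : ℕ) (v : X) (k : ℕ) : Ecoord i v k = if k = i then v else 0 := rfl

lemma Ecoord_norm_le (i : ℕ) (v : X) (k : ℕ) : ‖Ecoord i v k‖ ≤ ‖v‖ := by
  rw [Ecoord_apply]
  by_cases h : k = i
  · rw [if_pos h]
  · rw [if_neg h]; simp

lemma construct {L : ℕ → ((ℕ → X) →ₗ[ℝ] X)} {M : ℝ}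
    (hM : ∀ (f : ℕ → X) (c : ℝ), 0 ≤ c → (∀ m, ‖f m‖ ≤ c) → ∀ n : ℕ, ‖sol L f n‖ ≤ M * c)
    {Q : ℝ} (hQ0 : 0 ≤ Q) {i : ℕ}
    (hQ : ∀ i' < i, ∀ (n : ℕ) (v : X), ‖L n (Ecoord i' v)‖ ≤ Q * ‖v‖) :
    ∀ n : ℕ, i < n → ∀ v : X, ‖L n (Ecoord i v)‖ ≤ M * ((1 + Q) * ‖v‖) := by
  intro n hn v
  set m₀ := n - i with hm₀
  have hm₀1 : 1 ≤ m₀ := by omega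
  have hm₀n : m₀ ≤ n := by omega
  set f : ℕ → X := fun m =>
    if m = m₀ - 1 then v
    else if m₀ ≤ m ∧ m ≤ n - 1 then -(L m (Ecoord (m - m₀) v)) else 0 with hfdef
  have hc0 : (0:ℝ) ≤ (1 + Q) * ‖v‖ := by positivity
  have hfb : ∀ m, ‖f m‖ ≤ (1 + Q) * ‖v‖ := by
    intro m
    simp only [hfdef]
    by_cases h1 : m = m₀ - 1
    · rw [if_pos h1]
      nlinarith [norm_nonneg v]
    · rw [if_neg h1]
      by_cases h2 : m₀ ≤ m ∧ m ≤ n - 1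
      · rw [if_pos h2]
        rw [norm_neg]
        have hlt : m - m₀ < i := by omega
        have := hQ (m - m₀) hlt m v
        nlinarith [norm_nonneg v]
      · rw [if_neg h2]; simpa using hc0
  -- the key claim describing the solution up to time n
  have claimA : ∀ t, t ≤ n → sol L f t = if t = m₀ then v else 0 := by
    intro t
    induction t using Nat.strong_induction_on with
    | _ t ih =>
      match t with
      | 0 =>
        intro _
        rw [if_neg (by omega : (0:ℕ) ≠ m₀)]
        rw [sol]
      | (s+1) =>
        intro hs
        rw [sol_succ]
        have hfs0 : ∀ k, k ≤ s → sol L f (s - k) = if s - k = m₀ then v else 0 := by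
          intro k hk
          exact ih (s - k) (by omega) (by omega)
        rcases lt_trichotomy (s+1) m₀ with h | h | h
        · have hH : histN (sol L f) s = (0 : ℕ → X) := by
            funext k
            simp only [histN, Pi.zero_apply]
            by_cases hk : k ≤ s
            · rw [if_pos hk, hfs0 k hk, if_neg (by omega : ¬ s - k = m₀)]
            · rw [if_neg hk]
          have hf0 : f s = 0 := by
            simp only [hfdef]
            rw [if_neg (by omega : ¬ s = m₀ - 1), if_neg (by omega : ¬ (m₀ ≤ s ∧ s ≤ n - 1))]
          rw [hH, hf0, map_zero, if_neg (by omega : ¬ s + 1 = m₀)]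
          simp
        · have hH : histN (sol L f) s = (0 : ℕ → X) := by
            funext k
            simp only [histN, Pi.zero_apply]
            by_cases hk : k ≤ s
            · rw [if_pos hk, hfs0 k hk, if_neg (by omega : ¬ s - k = m₀)]
            · rw [if_neg hk]
          have hfv : f s = v := by
            simp only [hfdef]
            rw [if_pos (by omega : s = m₀ - 1)]
          rw [hH, hfv, map_zero, if_pos h]
          simp
        · have hms : m₀ ≤ s := by omega
          have hH : histN (sol L f) s = Ecoord (s - m₀) v := by
            funext k
            simp only [histN, Ecoord_apply]
            by_cases hk : k ≤ s
            · rw [if_pos hk, hfs0 k hk]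
              by_cases hkk : k = s - m₀
              · rw [if_pos (by omega : s - k = m₀), if_pos hkk]
              · rw [if_neg (by omega : ¬ s - k = m₀), if_neg hkk]
            · rw [if_neg hk, if_neg (by omega : ¬ k = s - m₀)]
          have hfneg : f s = -(L s (Ecoord (s - m₀) v)) := by
            simp only [hfdef]
            rw [if_neg (by omega : ¬ s = m₀ - 1),
              if_pos (⟨hms, by omega⟩ : m₀ ≤ s ∧ s ≤ n - 1)]
          rw [hH, hfneg, if_neg (by omega : ¬ s + 1 = m₀)]
          simp
  -- final step
  have hHn : histN (sol L f) n = Ecoord i v := by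
    funext k
    simp only [histN, Ecoord_apply]
    by_cases hk : k ≤ n
    · rw [if_pos hk, claimA (n - k) (by omega)]
      by_cases hkk : k = i
      · rw [if_pos (by omega : n - k = m₀), if_pos hkk]
      · rw [if_neg (by omega : ¬ n - k = m₀), if_neg hkk]
    · rw [if_neg hk, if_neg (by omega : ¬ k = i)]
  have hfn : f n = 0 := by
    simp only [hfdef]
    rw [if_neg (by omega : ¬ n = m₀ - 1), if_neg (by omega : ¬ (m₀ ≤ n ∧ n ≤ n - 1))]
  have hfinal : sol L f (n+1) = L n (Ecoord i v) := by
    rw [sol_succ, hHn, hfn, add_zero]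
  calc ‖L n (Ecoord i v)‖ = ‖sol L f (n+1)‖ := by rw [hfinal]
    _ ≤ M * ((1 + Q) * ‖v‖) := hM f _ hc0 hfb (n+1)

lemma Bnorm_ecoord_le (i : ℕ) (v : X) : Bnorm 0 (Ecoord i v) ≤ ‖v‖ :=
  Bnorm_le (Ecoord_norm_le i v)

lemma memB_ecoord (i : ℕ) (v : X) : MemB 0 (Ecoord i v) :=
  memB_zero_of_bound (Ecoord_norm_le i v)

lemma ecoord_cum_bound {L : ℕ → ((ℕ → X) →ₗ[ℝ] X)} (hL : ∀ n, OpBounded 0 (L n))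
    {M : ℝ} (hM0 : 0 ≤ M)
    (hM : ∀ (f : ℕ → X) (c : ℝ), 0 ≤ c → (∀ m, ‖f m‖ ≤ c) → ∀ n : ℕ, ‖sol L f n‖ ≤ M * c) :
    ∀ j : ℕ, ∃ Q : ℝ, 0 ≤ Q ∧ ∀ i ≤ j, ∀ (n : ℕ) (v : X), ‖L n (Ecoord i v)‖ ≤ Q * ‖v‖ := by
  classical
  choose C hC using hL
  intro j
  induction j with
  | zero =>
    refine ⟨max (max (C 0) 0) M, le_trans (le_max_right _ _) (le_max_left _ _),
      fun i hi n v => ?_⟩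
    interval_cases i
    rcases Nat.eq_zero_or_pos n with hn | hn
    · subst hn
      calc ‖L 0 (Ecoord 0 v)‖ ≤ C 0 * Bnorm 0 (Ecoord 0 v) := hC 0 _ (memB_ecoord 0 v)
        _ ≤ max (C 0) 0 * ‖v‖ := by
            have h1 := Bnorm_nonneg (Ecoord 0 v : ℕ → X)
            have h2 := Bnorm_ecoord_le 0 v
            nlinarith [le_max_left (C 0) (0:ℝ), le_max_right (C 0) (0:ℝ)]
        _ ≤ max (max (C 0) 0) M * ‖v‖ :=
            mul_le_mul_of_nonneg_right (le_max_left _ _) (norm_nonneg v)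
    · have := construct hM (le_refl (0:ℝ)) (fun i' hi' => absurd hi' (Nat.not_lt_zero i'))
        n hn v
      calc ‖L n (Ecoord 0 v)‖ ≤ M * ((1 + 0) * ‖v‖) := this
        _ = M * ‖v‖ := by ring
        _ ≤ max (max (C 0) 0) M * ‖v‖ :=
            mul_le_mul_of_nonneg_right (le_max_right _ _) (norm_nonneg v)
  | succ j ih =>
    obtain ⟨Q, hQ0, hQ⟩ := ih
    set c₀ : ℝ := ∑ m ∈ Finset.range (j + 2), max (C m) 0 with hc₀
    have hc₀0 : 0 ≤ c₀ := Finset.sum_nonneg fun m _ => le_max_right _ _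
    refine ⟨max Q (max c₀ (M * (1 + Q))), le_trans hQ0 (le_max_left _ _), fun i hi n v => ?_⟩
    rcases Nat.lt_succ_iff_lt_or_eq.mp (Nat.lt_succ_of_le hi) with h | h
    · have := hQ i (Nat.lt_succ_iff.mp h) n v
      calc ‖L n (Ecoord i v)‖ ≤ Q * ‖v‖ := this
        _ ≤ max Q (max c₀ (M * (1 + Q))) * ‖v‖ :=
            mul_le_mul_of_nonneg_right (le_max_left _ _) (norm_nonneg v)
    · subst h
      by_cases hn : j + 1 < n
      · have := construct hM hQ0 (fun i' hi' n' v' => hQ i' (Nat.lt_succ_iff.mp hi') n' v')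
          n hn v
        calc ‖L n (Ecoord (j+1) v)‖ ≤ M * ((1 + Q) * ‖v‖) := this
          _ = M * (1 + Q) * ‖v‖ := by ring
          _ ≤ max Q (max c₀ (M * (1 + Q))) * ‖v‖ :=
              mul_le_mul_of_nonneg_right
                (le_trans (le_max_right _ _) (le_max_right _ _)) (norm_nonneg v)
      · have hnle : n < j + 2 := by omega
        calc ‖L n (Ecoord (j+1) v)‖ ≤ C n * Bnorm 0 (Ecoord (j+1) v) :=
              hC n _ (memB_ecoord (j+1) v)
          _ ≤ max (C n) 0 * ‖v‖ := by
              have h1 := Bnorm_nonneg (Ecoord (j+1) v : ℕ → X)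
              have h2 := Bnorm_ecoord_le (j+1) v
              nlinarith [le_max_left (C n) (0:ℝ), le_max_right (C n) (0:ℝ)]
          _ ≤ c₀ * ‖v‖ := by
              refine mul_le_mul_of_nonneg_right ?_ (norm_nonneg v)
              rw [hc₀]
              exact Finset.single_le_sum (f := fun m => max (C m) 0)
                (fun m _ => le_max_right _ _) (Finset.mem_range.mpr hnle)
          _ ≤ max Q (max c₀ (M * (1 + Q))) * ‖v‖ :=
              mul_le_mul_of_nonneg_right
                (le_trans (le_max_left _ _) (le_max_right _ _)) (norm_nonneg v)

lemma L_uniform_bound {L : ℕ → ((ℕ → X) →ₗ[ℝ] X)} (hL : ∀ n, OpBounded 0 (L n))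
    (h1 : lplqStable L ∞ ∞) (h2 : StarCond 0 L) :
    ∃ Ct : ℝ, 0 ≤ Ct ∧ ∀ (n : ℕ) (φ : ℕ → X), MemB 0 φ → ‖L n φ‖ ≤ Ct * Bnorm 0 φ := by
  obtain ⟨M, hM0, hM⟩ := master hL h1
  obtain ⟨j, C, hstar⟩ := h2
  obtain ⟨Q, hQ0, hQ⟩ := ecoord_cum_bound hL hM0 hM j
  refine ⟨max C 0 + j * Q, by positivity, fun n φ hφ => ?_⟩
  have hB0 : 0 ≤ Bnorm 0 φ := Bnorm_nonneg φ
  have hdecomp : φ = Ptail j φ + ∑ i ∈ Finset.range j, Ecoord i (φ i) := by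
    funext k
    simp only [Pi.add_apply, Finset.sum_apply, Ptail, LinearMap.coe_mk, AddHom.coe_mk,
      Ecoord_apply]
    rw [Finset.sum_ite_eq (Finset.range j) k (fun i => φ i)]
    by_cases h : j ≤ k
    · rw [if_pos h, if_neg (by simpa using by omega : k ∉ Finset.range j), add_zero]
    · rw [if_neg h, if_pos (by simpa using by omega : k ∈ Finset.range j), zero_add]
  have hsum : ‖L n φ‖ ≤ ‖L n (Ptail j φ)‖ + ∑ i ∈ Finset.range j, ‖L n (Ecoord i (φ i))‖ := by
    conv_lhs => rw [hdecomp]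
    rw [map_add, map_sum]
    exact le_trans (norm_add_le _ _) (by gcongr; exact norm_sum_le _ _)
  have hterm : ∀ i ∈ Finset.range j, ‖L n (Ecoord i (φ i))‖ ≤ Q * Bnorm 0 φ := by
    intro i hi
    have hij : i ≤ j := le_of_lt (Finset.mem_range.mp hi)
    exact le_trans (hQ i hij n (φ i)) (mul_le_mul_of_nonneg_left (norm_le_Bnorm hφ i) hQ0)
  calc ‖L n φ‖ ≤ ‖L n (Ptail j φ)‖ + ∑ i ∈ Finset.range j, ‖L n (Ecoord i (φ i))‖ := hsum
    _ ≤ C * Bnorm 0 φ + j * (Q * Bnorm 0 φ) := by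
        refine add_le_add (hstar n φ hφ) ?_
        refine le_trans (Finset.sum_le_sum hterm) ?_
        rw [Finset.sum_const, Finset.card_range]
        simp [nsmul_eq_mul]
    _ ≤ (max C 0 + j * Q) * Bnorm 0 φ := by
        have : C * Bnorm 0 φ ≤ max C 0 * Bnorm 0 φ :=
          mul_le_mul_of_nonneg_right (le_max_left _ _) hB0
        nlinarith

/-- Corollary 4.8 (i): if the system is `(ℓ^∞,ℓ^∞)`-stable and
`sup_n ‖L(n)P_{[−∞,m]}‖_{B^0→X} < ∞` for some `m ≤ 0`, then the homogeneous
system is uniformly stable in `B^0`. -/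
theorem statement6 (L : ℕ → ((ℕ → X) →ₗ[ℝ] X)) (hL : ∀ n, OpBounded 0 (L n))
    (h1 : lplqStable L ∞ ∞) (h2 : StarCond 0 L) :
    USinB 0 L := by
  obtain ⟨Ct, hCt0, hCt⟩ := L_uniform_bound hL h1 h2
  obtain ⟨M, hM0, hM⟩ := master hL h1
  refine ⟨max (M * Ct) 1, le_max_right _ _, fun τ φ hφ x hx n hn => ?_⟩
  have hB0 : 0 ≤ Bnorm 0 φ := Bnorm_nonneg φ
  -- values of x at times ≤ τ are values of φ
  have hxpast : ∀ t : ℤ, t ≤ (τ:ℤ) → ‖x t‖ ≤ Bnorm 0 φ := by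
    intro t ht
    have hk : (τ:ℤ) - (((τ:ℤ) - t).toNat : ℕ) = t := by omega
    have h := hx.1 ((τ:ℤ) - t).toNat
    rw [hk] at h
    rw [h]
    exact norm_le_Bnorm hφ _
  set y : ℤ → X := fun t => if (τ:ℤ) < t then x t else 0 with hy
  set g : ℕ → X := fun m =>
    if τ ≤ m then L m (hist x (m:ℤ) - hist y (m:ℤ)) else 0 with hg
  -- bound on the forcing term
  have hdb : ∀ m : ℕ, ∀ k : ℕ, ‖(hist x (m:ℤ) - hist y (m:ℤ)) k‖ ≤ Bnorm 0 φ := by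
    intro m k
    simp only [Pi.sub_apply, hist, hy]
    by_cases h : (τ:ℤ) < (m:ℤ) - k
    · rw [if_pos h]
      simpa using hB0
    · rw [if_neg h, sub_zero]
      exact hxpast _ (by omega)
  have hgb : ∀ m, ‖g m‖ ≤ Ct * Bnorm 0 φ := by
    intro m
    simp only [hg]
    by_cases h : τ ≤ m
    · rw [if_pos h]
      refine le_trans (hCt m _ (memB_zero_of_bound (hdb m))) ?_
      exact mul_le_mul_of_nonneg_left (Bnorm_le (hdb m)) hCt0
    · rw [if_neg h]
      simpa using mul_nonneg hCt0 hB0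
  -- y is a solution of the nonhomogeneous system with forcing g and zero initial data
  have hsol : IsSolution L g 0 0 y := by
    constructor
    · intro k
      simp only [hy]
      rw [if_neg (by omega : ¬ (τ:ℤ) < ((0:ℕ):ℤ) - k)]
      rfl
    · intro m _
      by_cases hm : τ ≤ m
      · have hyx : y ((m:ℤ) + 1) = x ((m:ℤ) + 1) := by
          simp only [hy]
          rw [if_pos (by omega : (τ:ℤ) < (m:ℤ) + 1)]
        have hx2 := hx.2 m hm
        have hgm : g m = L m (hist x (m:ℤ)) - L m (hist y (m:ℤ)) := by
          simp only [hg]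
          rw [if_pos hm, map_sub]
        rw [hyx, hx2, hgm]
        simp only [Pi.zero_apply]
        abel
      · have hy0 : y ((m:ℤ) + 1) = 0 := by
          simp only [hy]
          rw [if_neg (by omega : ¬ (τ:ℤ) < (m:ℤ) + 1)]
        have hhy : hist y (m:ℤ) = (0 : ℕ → X) := by
          funext k
          simp only [hist, hy, Pi.zero_apply]
          rw [if_neg (by omega : ¬ (τ:ℤ) < (m:ℤ) - k)]
        have hgm : g m = 0 := by
          simp only [hg]
          rw [if_neg hm]
        rw [hy0, hhy, hgm, map_zero, add_zero]
  -- uniform bound on y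
  have hybound : ∀ m : ℕ, ‖y (m:ℤ)‖ ≤ M * (Ct * Bnorm 0 φ) := by
    intro m
    rw [sol_unique hsol m]
    exact hM g (Ct * Bnorm 0 φ) (mul_nonneg hCt0 hB0) hgb m
  -- conclude
  refine Bnorm_le fun k => ?_
  simp only [hist]
  by_cases h : (n:ℤ) - k ≤ (τ:ℤ)
  · refine le_trans (hxpast _ h) ?_
    exact le_mul_of_one_le_left hB0 (le_max_right _ _)
  · have h0 : (0:ℤ) ≤ (n:ℤ) - k := by omega
    have hm : ((((n:ℤ) - k).toNat : ℕ) : ℤ) = (n:ℤ) - k := by omega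
    have hxy : x ((n:ℤ) - k) = y ((n:ℤ) - k) := by
      simp only [hy]
      rw [if_pos (by omega : (τ:ℤ) < (n:ℤ) - k)]
    rw [hxy, ← hm]
    refine le_trans (hybound _) ?_
    calc M * (Ct * Bnorm 0 φ) = (M * Ct) * Bnorm 0 φ := by ring
      _ ≤ max (M * Ct) 1 * Bnorm 0 φ :=
          mul_le_mul_of_nonneg_right (le_max_left _ _) hB0

end BP
end

section
/- Let γ ∈ ℝ and let L(n) : B^γ → X (n ≥ 0) be bounded linear operators. Let g : ℤ≥0 → B^γ and define y : ℤ≥0 → B^γ by y(0) = 0_B and y(n+1) = D(n)y(n) + g(n). Let h = Hg, let g^{[0]} : ℤ≥0 → X be g^{[0]}(n) := (g(n))(0), and let (Lh)(n) := L(n)h(n). Then for all n ≥ 0, y(n) = x_n(0, 0_B; g^{[0]} + Lh) + h(n), where x_n(0, 0_B; g^{[0]} + Lh) is the history at n of the solution of x(n+1) = L(n)x_n + (g^{[0]}(n) + L(n)h(n)) with zero initial data at τ = 0. -/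
open scoped ENNReal
open MeasureTheory

namespace BP

variable {X : Type*} [NormedAddCommGroup X] [NormedSpace ℝ X] [CompleteSpace X]

lemma Hsucc (g : ℕ → (ℕ → X)) (n : ℕ) :
    Hop g (n + 1) = shiftS (Hop g n) +
      ((LinearMap.id - Phead 0 : (ℕ → X) →ₗ[ℝ] (ℕ → X)) (g n)) := by
  unfold Hop
  rw [Finset.sum_range_succ, map_sum]
  congr 1
  · apply Finset.sum_congr rfl
    intro k hk
    have hk' : k < n := Finset.mem_range.mp hk
    have h1 : n + 1 - k - 1 = (n - k - 1) + 1 := by omega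
    rw [h1, pow_succ']
    rfl
  · have : n + 1 - n - 1 = 0 := by omega
    rw [this, pow_zero]
    rfl

/-- Proposition 3.8, representation theorem: `y(n) = x_n(0,0_B; g⁰ + Lh) + h(n)`
where `h = Hg` and `y` solves `y(n+1) = D(n)y(n) + g(n)`, `y(0) = 0`. -/
theorem statement9 (γ : ℝ) (L : ℕ → ((ℕ → X) →ₗ[ℝ] X)) (hL : ∀ n, OpBounded γ (L n))
    (g : ℕ → (ℕ → X)) (y : ℕ → (ℕ → X)) (hy0 : y 0 = 0)
    (hy : ∀ n : ℕ, y (n + 1) = Dop L n (y n) + g n)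
    (x : ℤ → X) (hx : IsSolution L (fun n => g n 0 + L n (Hop g n)) 0 0 x) :
    ∀ n : ℕ, y n = hist x (n : ℤ) + Hop g n := by
  have hx1 := hx.1
  have hx2 := hx.2
  intro n
  induction n with
  | zero =>
      rw [hy0]
      funext k
      have h0 := hx1 k
      simpa [Hop, hist] using h0.symm
  | succ n ih =>
      rw [hy n, ih, Hsucc]
      funext k
      have hc : ((n + 1 : ℕ) : ℤ) = (n : ℤ) + 1 := by push_cast; ring
      have hrec := hx2 n (Nat.zero_le n)
      simp only [] at hrec
      cases k with
      | zero =>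
          have hh : hist x ((n : ℤ) + 1) 0 = x ((n : ℤ) + 1) := by simp [hist]
          have hE : (Ecoord 0 : X →ₗ[ℝ] (ℕ → X))
              (L n (hist x (n : ℤ) + Hop g n)) 0
              = L n (hist x (n : ℤ) + Hop g n) := by simp [Ecoord]
          have hS : shiftS (hist x (n : ℤ) + Hop g n) 0 = 0 := by simp [shiftS]
          have hS2 : shiftS (Hop g n) 0 = 0 := by simp [shiftS]
          have hP : ((LinearMap.id - Phead 0 : (ℕ → X) →ₗ[ℝ] (ℕ → X)) (g n)) 0 = 0 := by
            simp [Phead]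
          simp only [Pi.add_apply, Dop, LinearMap.add_apply, LinearMap.coe_comp,
            Function.comp_apply, hc, hh, hE, hS, hS2, hP, hrec, map_add]
          simp only [Ecoord, shiftS, LinearMap.coe_mk, AddHom.coe_mk, if_pos rfl, if_true]
          abel
      | succ k =>
          have hh : hist x ((n : ℤ) + 1) (k + 1) = hist x (n : ℤ) k := by
            simp only [hist]
            congr 1
            push_cast
            ring
          have hE : (Ecoord 0 : X →ₗ[ℝ] (ℕ → X))
              (L n (hist x (n : ℤ) + Hop g n)) (k + 1) = 0 := by simp [Ecoord]
          have hS : shiftS (hist x (n : ℤ) + Hop g n) (k + 1)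
              = hist x (n : ℤ) k + Hop g n k := by simp [shiftS]
          have hS2 : shiftS (Hop g n) (k + 1) = Hop g n k := by simp [shiftS]
          have hP : ((LinearMap.id - Phead 0 : (ℕ → X) →ₗ[ℝ] (ℕ → X)) (g n)) (k + 1)
              = g n (k + 1) := by simp [Phead]
          simp only [Pi.add_apply, Dop, LinearMap.add_apply, LinearMap.coe_comp,
            Function.comp_apply, hc, hh, hE, hS, hS2, hP]
          abel

end BP
end
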